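/- Let g be the 6-dimensional nilpotent real Lie algebra with basis e_1,…,e_6 and nonzero brackets [e_1,e_2] = −e_4, [e_1,e_3] = −e_5, [e_1,e_4] = −e_5, [e_2,e_4] = −e_6, and let K be the endomorphism equal to +id on g⁺ := span(e_1, e_3, e_5) and −id on g⁻ := span(e_2, e_4, e_6). Then: (i) g = g⁺ ⊕ g⁻ is a (non-Abelian) linear D-complex structure; (ii) the 2-form ω := e^1∧e^6 + e^2∧e^5 + e^3∧e^4 is d-closed, nondegenerate and K-anti-invariant (a linear D-Kähler structure); (iii) K is not linear C∞-pure at the 2nd stage: the forms e^1∧e^3 (K-invariant) and −e^1∧e^4 (K-anti-invariant) are both d-closed, differ by the exact form d(e^5), and define the same nonzero class, so 0 ≠ [e^1∧e^3] ∈ H^{2+}_K(g;ℝ) ∩ H^{2−}_K(g;ℝ). -/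

import Mathlib

/-!
In the coordinates of the basis `e` everything is explicit: bilinearity turns the structure
constants into a formula for the coordinates of `⁅x, y⁆`, and `K` multiplies the coordinates by
`(1, -1, 1, -1, 1, -1)`. Closedness, exactness, nondegeneracy and (anti-)invariance of the forms
involved thus become polynomial identities. The class of `e¹∧e³` is not zero because
`[e₁, e₃] = [e₁, e₄]`: every exact 2-form `dβ = -β([·,·])` takes the same value on `(e₁, e₃)` and on
`(e₁, e₄)`, while `e¹∧e³` takes the values `1` and `0`.
-/

open scoped BigOperators

noncomputable section ChevalleyEilenberg

variable (g : Type*) [LieRing g] [LieAlgebra ℝ g]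

/-- The Chevalley–Eilenberg differential of an alternating `k`-form on a real Lie
algebra, as a function on `(k+1)`-tuples:
`(dα)(x_0,…,x_k) = Σ_{i<j} (−1)^{i+j} α([x_i,x_j], x_0,…,x̂_i,…,x̂_j,…,x_k)`. -/
def ceD : {k : ℕ} → AlternatingMap ℝ g ℝ (Fin k) → ((Fin (k + 1) → g) → ℝ)
  | 0, _ => 0
  | (k + 1), α => fun x =>
      ∑ i : Fin (k + 2), ∑ j : Fin (k + 2),
        if hij : (i : ℕ) < (j : ℕ) then
          (-1 : ℝ) ^ ((i : ℕ) + (j : ℕ)) *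
            α (fun m : Fin (k + 1) =>
                if hm : (m : ℕ) = 0 then ⁅x i, x j⁆
                else
                  x (j.succAbove
                      ((⟨(i : ℕ), by omega⟩ : Fin (k + 1)).succAbove
                        (⟨(m : ℕ) - 1, by omega⟩ : Fin k))))
        else 0

theorem ceD_zero {k : ℕ} : ceD g (0 : AlternatingMap ℝ g ℝ (Fin k)) = 0 := by
  cases k with
  | zero => rfl
  | succ k => funext x; simp [ceD]

theorem ceD_add {k : ℕ} (α β : AlternatingMap ℝ g ℝ (Fin k)) :
    ceD g (α + β) = ceD g α + ceD g β := by
  cases k with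
  | zero => funext x; simp [ceD]
  | succ k =>
    funext x
    simp only [ceD, Pi.add_apply, AlternatingMap.add_apply]
    rw [← Finset.sum_add_distrib]
    refine Finset.sum_congr rfl fun i _ => ?_
    rw [← Finset.sum_add_distrib]
    refine Finset.sum_congr rfl fun j _ => ?_
    split
    · ring
    · ring

theorem ceD_smul {k : ℕ} (c : ℝ) (α : AlternatingMap ℝ g ℝ (Fin k)) :
    ceD g (c • α) = c • ceD g α := by
  cases k with
  | zero => funext x; simp [ceD]
  | succ k =>
    funext x
    simp only [ceD, Pi.smul_apply, AlternatingMap.smul_apply, smul_eq_mul,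
      Finset.mul_sum]
    refine Finset.sum_congr rfl fun i _ => ?_
    refine Finset.sum_congr rfl fun j _ => ?_
    split
    · ring
    · ring

/-- The space of `d`-closed `k`-forms. -/
def Zsub (k : ℕ) : Submodule ℝ (AlternatingMap ℝ g ℝ (Fin k)) where
  carrier := {α | ceD g α = 0}
  add_mem' := by
    intro a b ha hb
    simp only [Set.mem_setOf_eq] at *
    rw [ceD_add, ha, hb, add_zero]
  zero_mem' := by
    simpa only [Set.mem_setOf_eq] using ceD_zero g
  smul_mem' := by
    intro c a ha
    simp only [Set.mem_setOf_eq] at *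
    rw [ceD_smul, ha, smul_zero]

/-- The space of `d`-exact `k`-forms. -/
def Bsub : (k : ℕ) → Submodule ℝ (AlternatingMap ℝ g ℝ (Fin k))
  | 0 => ⊥
  | (k + 1) =>
    { carrier := {α | ∃ β : AlternatingMap ℝ g ℝ (Fin k), ceD g β = ⇑α}
      add_mem' := by
        rintro a b ⟨βa, hβa⟩ ⟨βb, hβb⟩
        exact ⟨βa + βb, by rw [ceD_add, hβa, hβb]; ext x; simp⟩
      zero_mem' := ⟨0, by rw [ceD_zero]; ext x; simp⟩
      smul_mem' := by
        rintro c a ⟨β, hβ⟩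
        exact ⟨c • β, by rw [ceD_smul, hβ]; rfl⟩ }

/-- The `k`-th Lie algebra cohomology `H^k(g;ℝ) = ker d / im d`. -/
abbrev Hcoh (k : ℕ) : Type _ :=
  @HasQuotient.Quotient ↥(Zsub g k) _ Submodule.hasQuotient ((Bsub g k).comap (Zsub g k).subtype)

/-- The cohomology class of a `d`-closed `k`-form. -/
def cls {k : ℕ} (α : AlternatingMap ℝ g ℝ (Fin k)) (hα : ceD g α = 0) : Hcoh g k :=
  Submodule.Quotient.mk (⟨α, hα⟩ : Zsub g k)

/-- The subgroup `H^{k+}_K(g;ℝ)` of classes admitting a `d`-closed `K`-invariant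
representative.  (The set of such classes is a linear subspace, so taking its span
does not enlarge it.) -/
def Hplus (K : g →ₗ[ℝ] g) (k : ℕ) : Submodule ℝ (Hcoh g k) :=
  Submodule.span ℝ
    {c | ∃ (α : AlternatingMap ℝ g ℝ (Fin k)) (hα : ceD g α = 0),
        α.compLinearMap K = α ∧ c = cls g α hα}

/-- The subgroup `H^{k−}_K(g;ℝ)` of classes admitting a `d`-closed
`K`-anti-invariant representative. -/
def Hminus (K : g →ₗ[ℝ] g) (k : ℕ) : Submodule ℝ (Hcoh g k) :=
  Submodule.span ℝ
    {c | ∃ (α : AlternatingMap ℝ g ℝ (Fin k)) (hα : ceD g α = 0),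
        α.compLinearMap K = -α ∧ c = cls g α hα}

/-- The wedge product of `k` linear functionals, as an alternating `k`-form. -/
def wedge {k : ℕ} (fs : Fin k → (g →ₗ[ℝ] ℝ)) :
    AlternatingMap ℝ g ℝ (Fin k) :=
  MultilinearMap.alternatization
    ((MultilinearMap.mkPiAlgebra ℝ (Fin k) ℝ).compLinearMap fs)

end ChevalleyEilenberg

section FormsAndCohomology

variable {g : Type*} [LieRing g] [LieAlgebra ℝ g]

theorem wedge_one_apply (f : g →ₗ[ℝ] ℝ) (v : Fin 1 → g) : wedge g ![f] v = f (v 0) := by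
  simp [wedge, MultilinearMap.alternatization_apply]

theorem wedge_two_apply (f₀ f₁ : g →ₗ[ℝ] ℝ) (v : Fin 2 → g) :
    wedge g ![f₀, f₁] v = f₀ (v 0) * f₁ (v 1) - f₀ (v 1) * f₁ (v 0) := by
  have huniv : (Finset.univ : Finset (Equiv.Perm (Fin 2))) = {1, Equiv.swap 0 1} := by decide
  simp only [wedge, MultilinearMap.alternatization_apply, huniv]
  rw [Finset.sum_pair (by decide)]
  simp [Fin.prod_univ_two, sub_eq_add_neg]

theorem ceD_oneForm_apply (β : AlternatingMap ℝ g ℝ (Fin 1)) (x : Fin 2 → g) :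
    ceD g β x = -β ![⁅x 0, x 1⁆] := by
  simp only [ceD, Nat.reduceAdd, Fin.val_fin_lt, Fin.val_eq_zero, ↓reduceDIte, dite_eq_ite,
    Fin.sum_univ_two, Fin.isValue, not_lt_zero, ↓reduceIte, Fin.lt_one_iff, Fin.coe_ofNat_eq_mod,
    Nat.mod_succ, zero_add, Finset.sum_ite_eq', Finset.mem_univ, Nat.zero_mod, pow_one, neg_mul,
    one_mul, neg_inj]
  congr 1
  funext m
  fin_cases m
  rfl

theorem ceD_twoForm_apply (α : AlternatingMap ℝ g ℝ (Fin 2)) (x : Fin 3 → g) :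
    ceD g α x = -α ![⁅x 0, x 1⁆, x 2] + α ![⁅x 0, x 2⁆, x 1] - α ![⁅x 1, x 2⁆, x 0] := by
  simp only [ceD, Nat.reduceAdd, Fin.val_fin_lt, Fin.val_eq_zero_iff, Fin.isValue,
    Fin.sum_univ_three, not_lt_zero, ↓reduceDIte, Fin.lt_one_iff, Fin.coe_ofNat_eq_mod, Nat.one_mod,
    zero_add, Nat.mod_succ, Nat.zero_mod, pow_one, Fin.zero_eta, Fin.zero_succAbove, Fin.succ_mk,
    neg_mul, one_mul, Fin.reduceLT, even_two, Even.neg_pow, one_pow, one_ne_zero, Fin.mk_one,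
    Fin.reduceEq, lt_self_iff_false, add_zero]
  rw [show (-1 : ℝ) ^ 3 = -1 by norm_num, neg_one_mul, ← sub_eq_add_neg]
  congr 4 <;> funext m <;> fin_cases m <;> rfl

theorem cls_eq_zero_iff {k : ℕ} {α : AlternatingMap ℝ g ℝ (Fin (k + 1))} (hα : ceD g α = 0) :
    cls g α hα = 0 ↔ ∃ β : AlternatingMap ℝ g ℝ (Fin k), ceD g β = ⇑α :=
  Submodule.Quotient.mk_eq_zero _

theorem cls_eq_cls_of_ceD_eq_sub {k : ℕ} {α α' : AlternatingMap ℝ g ℝ (Fin (k + 1))}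
    (hα : ceD g α = 0) (hα' : ceD g α' = 0) (β : AlternatingMap ℝ g ℝ (Fin k))
    (hβ : ceD g β = ⇑(α - α')) : cls g α hα = cls g α' hα' :=
  (Submodule.Quotient.eq _).mpr ⟨β, hβ⟩

theorem cls_mem_Hplus {k : ℕ} (K : g →ₗ[ℝ] g) {α : AlternatingMap ℝ g ℝ (Fin k)}
    (hα : ceD g α = 0) (hK : α.compLinearMap K = α) : cls g α hα ∈ Hplus g K k :=
  Submodule.subset_span ⟨α, hα, hK, rfl⟩

theorem cls_mem_Hminus {k : ℕ} (K : g →ₗ[ℝ] g) {α : AlternatingMap ℝ g ℝ (Fin k)}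
    (hα : ceD g α = 0) (hK : α.compLinearMap K = -α) : cls g α hα ∈ Hminus g K k :=
  Submodule.subset_span ⟨α, hα, hK, rfl⟩

end FormsAndCohomology

theorem AlternatingMap.neg_compLinearMap {R M N M₂ ι : Type*} [CommRing R] [AddCommGroup M]
    [Module R M] [AddCommGroup N] [Module R N] [AddCommGroup M₂] [Module R M₂]
    (f : M [⋀^ι]→ₗ[R] N) (g : M₂ →ₗ[R] M) :
    (-f).compLinearMap g = -f.compLinearMap g := by
  ext v
  simp [AlternatingMap.compLinearMap_apply]

theorem lie_eq_sum_lt {R L ι : Type*} [CommRing R] [LieRing L] [LieAlgebra R L] [Fintype ι]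
    [LinearOrder ι] (b : Module.Basis ι R L) (x y : L) :
    ⁅x, y⁆ = ∑ i, ∑ j, if i < j then
      (b.repr x i * b.repr y j - b.repr x j * b.repr y i) • ⁅b i, b j⁆ else 0 := by
  set T : ι → ι → L := fun i j => (b.repr x i * b.repr y j) • ⁅b i, b j⁆
  have hsplit : ∀ i j, T i j = (if i < j then T i j else 0) + (if j < i then T i j else 0) := by
    intro i j
    rcases lt_trichotomy i j with h | rfl | h
    · simp [h, h.not_gt]
    · simp [T]
    · simp [h, h.not_gt]
  calc ⁅x, y⁆ = ∑ i, ∑ j, T i j := by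
        conv_lhs => rw [← b.sum_repr x, ← b.sum_repr y]
        simp only [T, sum_lie_sum, smul_lie, lie_smul, smul_smul, mul_comm]
    _ = ∑ i, ∑ j, ((if i < j then T i j else 0) + (if i < j then T j i else 0)) := by
        simp only [Finset.sum_add_distrib]
        rw [Finset.sum_comm (f := fun i j => if i < j then T j i else 0)]
        simp only [← Finset.sum_add_distrib, ← hsplit]
    _ = _ := by
        refine Finset.sum_congr rfl fun i _ => Finset.sum_congr rfl fun j _ => ?_
        split_ifs
        · simp only [T]
          rw [← lie_skew (b j) (b i)]
          module
        · simp

theorem Module.Basis.repr_apply_of_apply_eq_smul {ι R M : Type*} [CommSemiring R]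
    [AddCommMonoid M] [Module R M] (b : Module.Basis ι R M) {f : M →ₗ[R] M} {s : ι → R}
    (hf : ∀ i, f (b i) = s i • b i) (x : M) (t : ι) : b.repr (f x) t = s t * b.repr x t := by
  have : b.coord t ∘ₗ f = s t • b.coord t := b.ext fun i => by
    by_cases h : i = t <;> simp [hf, h]
  exact LinearMap.congr_fun this x

noncomputable section

section Stmt10

variable (g : Type*) [LieRing g] [LieAlgebra ℝ g] (e : Module.Basis (Fin 6) ℝ g)

/-- `g⁺ = span(e_1, e_3, e_5)` (0-indexed: `e 0, e 2, e 4`). -/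
def gP : Submodule ℝ g := Submodule.span ℝ {e 0, e 2, e 4}

/-- `g⁻ = span(e_2, e_4, e_6)` (0-indexed: `e 1, e 3, e 5`). -/
def gM : Submodule ℝ g := Submodule.span ℝ {e 1, e 3, e 5}

/-- `ω = e^1∧e^6 + e^2∧e^5 + e^3∧e^4`. -/
def omegaF : AlternatingMap ℝ g ℝ (Fin 2) :=
  wedge g ![e.coord 0, e.coord 5] + wedge g ![e.coord 1, e.coord 4] +
    wedge g ![e.coord 2, e.coord 3]

/-- `e^1∧e^3`. -/
def a13 : AlternatingMap ℝ g ℝ (Fin 2) := wedge g ![e.coord 0, e.coord 2]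

/-- `e^1∧e^4`. -/
def a14 : AlternatingMap ℝ g ℝ (Fin 2) := wedge g ![e.coord 0, e.coord 3]

def SatisfiesBracketTable : Prop :=
  ∀ i j : Fin 6, i < j → ⁅e i, e j⁆ =
      (if i = 0 ∧ j = 1 then -e 3 else if i = 0 ∧ j = 2 then -e 4
        else if i = 0 ∧ j = 3 then -e 4 else if i = 1 ∧ j = 3 then -e 5 else 0)

theorem repr_lie (hbr : SatisfiesBracketTable g e) (x y : g) (t : Fin 6) :
    e.repr ⁅x, y⁆ t = ![0, 0, 0, e.repr x 1 * e.repr y 0 - e.repr x 0 * e.repr y 1,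
      e.repr x 2 * e.repr y 0 - e.repr x 0 * e.repr y 2 +
        (e.repr x 3 * e.repr y 0 - e.repr x 0 * e.repr y 3),
      e.repr x 3 * e.repr y 1 - e.repr x 1 * e.repr y 3] t := by
  unfold SatisfiesBracketTable at hbr
  rw [lie_eq_sum_lt e]
  simp only [Fin.sum_univ_six]
  simp (disch := decide) only [hbr]
  fin_cases t <;> simp

theorem gP_eq_span_image : gP g e = Submodule.span ℝ (e '' {0, 2, 4}) := by
  simp [gP, Set.image_insert_eq]

theorem gM_eq_span_image : gM g e = Submodule.span ℝ (e '' {1, 3, 5}) := by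
  simp [gM, Set.image_insert_eq]

theorem isCompl_gP_gM : IsCompl (gP g e) (gM g e) := by
  rw [gP_eq_span_image, gM_eq_span_image]
  have hcompl : ({1, 3, 5} : Set (Fin 6)) = {0, 2, 4}ᶜ := by
    ext i
    fin_cases i <;> simp
  exact e.linearIndependent.isCompl_span_image e.span_eq (hcompl ▸ isCompl_compl)

theorem mem_gP_iff {x : g} : x ∈ gP g e ↔ e.repr x 1 = 0 ∧ e.repr x 3 = 0 ∧ e.repr x 5 = 0 := by
  rw [gP_eq_span_image, e.mem_span_image, Finsupp.support_subset_iff]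
  simp [Fin.forall_fin_succ]

theorem mem_gM_iff {x : g} : x ∈ gM g e ↔ e.repr x 0 = 0 ∧ e.repr x 2 = 0 ∧ e.repr x 4 = 0 := by
  rw [gM_eq_span_image, e.mem_span_image, Finsupp.support_subset_iff]
  simp [Fin.forall_fin_succ]

theorem lie_mem_gP (hbr : SatisfiesBracketTable g e) :
    ∀ x ∈ gP g e, ∀ y ∈ gP g e, ⁅x, y⁆ ∈ gP g e := by
  simp only [mem_gP_iff, repr_lie g e hbr]
  rintro x ⟨hx1, hx3, -⟩ y ⟨hy1, hy3, -⟩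
  simp [hx1, hx3, hy1, hy3]

theorem lie_mem_gM (hbr : SatisfiesBracketTable g e) :
    ∀ x ∈ gM g e, ∀ y ∈ gM g e, ⁅x, y⁆ ∈ gM g e := by
  simp only [mem_gM_iff, repr_lie g e hbr]
  rintro x ⟨hx0, -, -⟩ y ⟨hy0, -, -⟩
  simp [hx0, hy0]

theorem repr_K_apply (K : g →ₗ[ℝ] g) (hKp : ∀ x ∈ gP g e, K x = x) (hKq : ∀ x ∈ gM g e, K x = -x)
    (x : g) (t : Fin 6) : e.repr (K x) t = ![1, -1, 1, -1, 1, -1] t * e.repr x t := by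
  refine e.repr_apply_of_apply_eq_smul (fun i => ?_) x t
  fin_cases i
  all_goals first
    | simpa using hKp _ (Submodule.subset_span (by simp))
    | simpa using hKq _ (Submodule.subset_span (by simp))

theorem ceD_omegaF (hbr : SatisfiesBracketTable g e) : ceD g (omegaF g e) = 0 := by
  funext x
  rw [ceD_twoForm_apply]
  simp only [omegaF, AlternatingMap.add_apply, wedge_two_apply, Module.Basis.coord_apply,
    repr_lie g e hbr, Matrix.cons_val_zero, Matrix.cons_val_one, Matrix.cons_val_fin_one, Matrix.cons_val, Pi.zero_apply]
  ring

theorem omegaF_nondegenerate (x : g) (hx : ∀ y : g, omegaF g e ![x, y] = 0) : x = 0 := by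
  refine e.forall_coord_eq_zero_iff.mp fun t => ?_
  -- `ω` pairs the coordinate `t` with the basis vector `e (5 - t)`
  have h := hx (e (5 - t))
  fin_cases t <;> simpa [omegaF, wedge_two_apply, Finsupp.single_apply] using h

theorem omegaF_compLinearMap_eq_neg (K : g →ₗ[ℝ] g) (hKp : ∀ x ∈ gP g e, K x = x)
    (hKq : ∀ x ∈ gM g e, K x = -x) : (omegaF g e).compLinearMap K = -omegaF g e := by
  ext v
  simp only [AlternatingMap.compLinearMap_apply, AlternatingMap.neg_apply, omegaF,
    AlternatingMap.add_apply, wedge_two_apply, Module.Basis.coord_apply, repr_K_apply g e K hKp hKq,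
    Matrix.cons_val_zero, Matrix.cons_val_one, Matrix.cons_val]
  ring

theorem a13_compLinearMap_eq (K : g →ₗ[ℝ] g) (hKp : ∀ x ∈ gP g e, K x = x)
    (hKq : ∀ x ∈ gM g e, K x = -x) : (a13 g e).compLinearMap K = a13 g e := by
  ext v
  simp [a13, wedge_two_apply, AlternatingMap.compLinearMap_apply, repr_K_apply g e K hKp hKq]

theorem a14_compLinearMap_eq_neg (K : g →ₗ[ℝ] g) (hKp : ∀ x ∈ gP g e, K x = x)
    (hKq : ∀ x ∈ gM g e, K x = -x) : (a14 g e).compLinearMap K = -a14 g e := by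
  ext v
  simp only [AlternatingMap.compLinearMap_apply, AlternatingMap.neg_apply, a14, wedge_two_apply,
    Module.Basis.coord_apply, repr_K_apply g e K hKp hKq, Matrix.cons_val_zero, Matrix.cons_val]
  ring

theorem ceD_wedge_coord_four (hbr : SatisfiesBracketTable g e) :
    ceD g (wedge g ![e.coord 4]) = ⇑(a13 g e + a14 g e) := by
  funext x
  rw [ceD_oneForm_apply]
  simp only [wedge_one_apply, a13, a14, AlternatingMap.add_apply, wedge_two_apply,
    Module.Basis.coord_apply, repr_lie g e hbr, Matrix.cons_val_fin_one, Matrix.cons_val]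
  ring

theorem ceD_a13 (hbr : SatisfiesBracketTable g e) : ceD g (a13 g e) = 0 := by
  funext x
  rw [ceD_twoForm_apply]
  simp [a13, wedge_two_apply, repr_lie g e hbr]

theorem ceD_neg_a14 (hbr : SatisfiesBracketTable g e) : ceD g (-a14 g e) = 0 := by
  funext x
  rw [ceD_twoForm_apply]
  simp only [AlternatingMap.neg_apply, a14, wedge_two_apply, Module.Basis.coord_apply,
    repr_lie g e hbr, Matrix.cons_val_zero, Matrix.cons_val_one, Matrix.cons_val_fin_one, Matrix.cons_val, Pi.zero_apply]
  ring

theorem not_exists_ceD_eq_a13 (hbr : SatisfiesBracketTable g e) :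
    ¬ ∃ β : AlternatingMap ℝ g ℝ (Fin 1), ceD g β = ⇑(a13 g e) := by
  rintro ⟨β, hβ⟩
  have hlie : ⁅e 0, e 2⁆ = ⁅e 0, e 3⁆ := by simp [hbr 0 2 (by decide), hbr 0 3 (by decide)]
  have h02 := congrFun hβ ![e 0, e 2]
  have h03 := congrFun hβ ![e 0, e 3]
  simp [ceD_oneForm_apply, hlie, a13, wedge_two_apply] at h02 h03
  linarith

theorem exists_lie_ne_zero_gP (hbr : SatisfiesBracketTable g e) :
    ∃ x ∈ gP g e, ∃ y ∈ gP g e, ⁅x, y⁆ ≠ 0 :=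
  ⟨e 0, Submodule.subset_span (by simp), e 2, Submodule.subset_span (by simp),
    by simp [hbr 0 2 (by decide), e.ne_zero]⟩

/-- On the 6-dimensional nilpotent Lie algebra with
`[e_1,e_2] = −e_4`, `[e_1,e_3] = −e_5`, `[e_1,e_4] = −e_5`, `[e_2,e_4] = −e_6`,
the (non-Abelian) D-complex structure with `g⁺ = span(e_1,e_3,e_5)`,
`g⁻ = span(e_2,e_4,e_6)` admits the linear D-Kähler form
`ω = e^1∧e^6 + e^2∧e^5 + e^3∧e^4` but is not linear C∞-pure at the 2nd stage:
`0 ≠ [e^1∧e^3] ∈ H^{2+}_K ∩ H^{2−}_K`. -/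
theorem six_dim_DKahler_not_pure
    (hbr : ∀ i j : Fin 6, i < j → ⁅e i, e j⁆ =
      (if i = 0 ∧ j = 1 then -e 3 else if i = 0 ∧ j = 2 then -e 4
        else if i = 0 ∧ j = 3 then -e 4 else if i = 1 ∧ j = 3 then -e 5 else 0))
    (K : g →ₗ[ℝ] g)
    (hKp : ∀ x ∈ gP g e, K x = x) (hKq : ∀ x ∈ gM g e, K x = -x) :
    IsCompl (gP g e) (gM g e) ∧
    (∀ x ∈ gP g e, ∀ y ∈ gP g e, ⁅x, y⁆ ∈ gP g e) ∧
    (∀ x ∈ gM g e, ∀ y ∈ gM g e, ⁅x, y⁆ ∈ gM g e) ∧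
    ¬ ((∀ x ∈ gP g e, ∀ y ∈ gP g e, ⁅x, y⁆ = (0 : g)) ∧
       (∀ x ∈ gM g e, ∀ y ∈ gM g e, ⁅x, y⁆ = (0 : g))) ∧
    ceD g (omegaF g e) = 0 ∧
    (∀ x : g, (∀ y : g, omegaF g e ![x, y] = 0) → x = 0) ∧
    (omegaF g e).compLinearMap K = -(omegaF g e) ∧
    (a13 g e).compLinearMap K = a13 g e ∧
    (a14 g e).compLinearMap K = -(a14 g e) ∧
    ceD g (wedge g ![e.coord 4]) = ⇑(a13 g e + a14 g e) ∧
    (∃ (h1 : ceD g (a13 g e) = 0) (h2 : ceD g (-(a14 g e)) = 0),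
      cls g (a13 g e) h1 = cls g (-(a14 g e)) h2 ∧
      cls g (a13 g e) h1 ≠ 0 ∧
      cls g (a13 g e) h1 ∈ Hplus g K 2 ⊓ Hminus g K 2) := by
  have h13 := ceD_a13 g e hbr
  have h14 := ceD_neg_a14 g e hbr
  have hKa13 := a13_compLinearMap_eq g e K hKp hKq
  have hKa14 := a14_compLinearMap_eq_neg g e K hKp hKq
  have hcls : cls g (a13 g e) h13 = cls g (-a14 g e) h14 :=
    cls_eq_cls_of_ceD_eq_sub h13 h14 _ (by rw [sub_neg_eq_add]; exact ceD_wedge_coord_four g e hbr)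
  obtain ⟨x, hx, y, hy, hxy⟩ := exists_lie_ne_zero_gP g e hbr
  refine ⟨isCompl_gP_gM g e, lie_mem_gP g e hbr, lie_mem_gM g e hbr,
    fun h => hxy (h.1 x hx y hy), ceD_omegaF g e hbr, omegaF_nondegenerate g e,
    omegaF_compLinearMap_eq_neg g e K hKp hKq, hKa13, hKa14, ceD_wedge_coord_four g e hbr,
    h13, h14, hcls, fun h => not_exists_ceD_eq_a13 g e hbr ((cls_eq_zero_iff h13).mp h),
    cls_mem_Hplus K h13 hKa13, hcls ▸ cls_mem_Hminus K h14 ?_⟩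
  rw [AlternatingMap.neg_compLinearMap, hKa14]

end Stmt10

end
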